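/- Let N = 2 and p : (0,∞) → ℝ be nonnegative, non-increasing with p(a) > 0 for some a ∈ (0,1]. Then there exists w ∈ H¹(ℝ²) with (1/2)∫|∇w|² dx − (1/2)∫ p(|x|) w(x)² dx < 0. -/

import Mathlib

/-
Take a radial logarithmic cutoff `w(x) = b (log (|x| / ε) / L)` with `ε = a e^{-2L}` and a fixed
smooth profile `b` equal to `1` on `[1, 2]` and to `0` off `(0, 3)`: then `w = 1` on the annulus
`a e^{-L} ≤ |x| ≤ a` and `w = 0` for `|x| ≤ ε` and for `|x| ≥ a e^{L}`. In dimension two the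
Dirichlet integral is scale invariant, and the substitution `t = log (|x| / ε) / L` gives
`∫ |∇w|² = 2π (∫ b'²) / L`, which tends to `0` as `L → ∞`. Since `p` is non-increasing,
`p(|x|) ≥ p(a) > 0` on the annulus, so `∫ p(|x|) w² ≥ π p(a) (a² - (a/2)²)` once `e^{-L} ≤ 1/2`.
-/

open MeasureTheory
open Real Set Filter Topology

section Radial

variable {E : Type*} [NormedAddCommGroup E] {f : ℝ → ℝ}

theorem HasCompactSupport.comp_norm [ProperSpace E] {F : Type*} [NormedAddCommGroup F]
    {g : ℝ → F} (hg : HasCompactSupport g) : HasCompactSupport (fun x : E => g ‖x‖) := by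
  obtain ⟨R, hR⟩ := hg.isCompact.isBounded.subset_closedBall 0
  refine HasCompactSupport.intro (isCompact_closedBall (0 : E) R) fun x hx => ?_
  refine image_eq_zero_of_notMem_tsupport fun hmem => hx ?_
  simpa using hR hmem

theorem memLp_comp_norm [ProperSpace E] [MeasurableSpace E] [OpensMeasurableSpace E]
    {μ : Measure E} [IsFiniteMeasureOnCompacts μ] (hf : Continuous f) (hfc : HasCompactSupport f)
    (q : ENNReal) : MemLp (fun x : E => f ‖x‖) q μ :=
  (hf.comp continuous_norm).memLp_of_hasCompactSupport hfc.comp_norm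

theorem integrable_comp_norm_mul_sq [MeasurableSpace E] [OpensMeasurableSpace E]
    {μ : Measure E} {p : ℝ → ℝ} (hp0 : ∀ r > (0:ℝ), 0 ≤ p r) (hpmono : AntitoneOn p (Ioi 0))
    {ε : ℝ} (hε : 0 < ε) {w : E → ℝ} (hw : MemLp w 2 μ) (hw0 : ∀ x, ‖x‖ < ε → w x = 0) :
    Integrable (fun x => p ‖x‖ * w x ^ 2) μ := by
  -- `p` is only monotone on `(0, ∞)`; clamping the radius at `ε` makes the weight antitone on
  -- all of `ℝ`, hence measurable, and bounded by `p ε`.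
  have hmem : ∀ r, max ε r ∈ Ioi 0 := fun r => hε.trans_le (le_max_left ε r)
  have hclamp : (fun x => p ‖x‖ * w x ^ 2) = fun x => p (max ε ‖x‖) * w x ^ 2 := by
    funext x
    rcases lt_or_ge ‖x‖ ε with hx | hx
    · simp [hw0 x hx]
    · rw [max_eq_right hx]
  have hanti : Antitone fun r => p (max ε r) := fun r s hrs =>
    hpmono (hmem r) (hmem s) (max_le_max le_rfl hrs)
  rw [hclamp]
  refine hw.integrable_sq.bdd_mul (c := p ε)
    (hanti.measurable.comp measurable_norm).aestronglyMeasurable (ae_of_all _ fun x => ?_)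
  rw [Real.norm_eq_abs, abs_of_nonneg (hp0 _ (hmem _))]
  exact hpmono (mem_Ioi.2 hε) (hmem _) (le_max_left _ _)

theorem hasFDerivAt_comp_norm_zero [NormedSpace ℝ E] (hf : HasDerivAt f 0 0) :
    HasFDerivAt (fun x : E => f ‖x‖) (0 : E →L[ℝ] ℝ) 0 := by
  rw [hasDerivAt_iff_isLittleO] at hf
  rw [hasFDerivAt_iff_isLittleO_nhds_zero]
  have := hf.comp_tendsto (tendsto_norm_zero (E := E))
  exact Asymptotics.isLittleO_norm_right.mp (by simpa [Function.comp_def] using this)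

variable [InnerProductSpace ℝ E]

theorem hasFDerivAt_comp_norm (hf : Differentiable ℝ f) (hf0 : deriv f 0 = 0) (x : E) :
    HasFDerivAt (fun x : E => f ‖x‖) (deriv f ‖x‖ • fderiv ℝ (‖·‖) x) x := by
  rcases eq_or_ne x 0 with rfl | hx
  · simpa [hf0] using hasFDerivAt_comp_norm_zero (E := E) (hf0 ▸ (hf 0).hasDerivAt :)
  · exact (hf _).hasDerivAt.comp_hasFDerivAt x
      ((contDiffAt_norm ℝ hx).differentiableAt one_ne_zero).hasFDerivAt

theorem differentiable_comp_norm (hf : Differentiable ℝ f) (hf0 : deriv f 0 = 0) :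
    Differentiable ℝ (fun x : E => f ‖x‖) :=
  fun x => (hasFDerivAt_comp_norm hf hf0 x).differentiableAt

theorem norm_fderiv_comp_norm (hf : Differentiable ℝ f) (hf0 : deriv f 0 = 0) (x : E) :
    ‖fderiv ℝ (fun x : E => f ‖x‖) x‖ = |deriv f ‖x‖| := by
  rw [(hasFDerivAt_comp_norm hf hf0 x).fderiv, norm_smul, Real.norm_eq_abs]
  rcases eq_or_ne x 0 with rfl | hx
  · simp [hf0]
  · have : Nontrivial E := nontrivial_of_ne x 0 hx
    rw [norm_fderiv_norm ((contDiffAt_norm ℝ hx).differentiableAt one_ne_zero), mul_one]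

theorem memLp_fderiv_comp_norm [FiniteDimensional ℝ E] [MeasurableSpace E]
    [OpensMeasurableSpace E] {μ : Measure E} [IsFiniteMeasureOnCompacts μ] (hf : ContDiff ℝ 1 f)
    (hf0 : deriv f 0 = 0) (hfc : HasCompactSupport f) (q : ENNReal) :
    MemLp (fderiv ℝ (fun x : E => f ‖x‖)) q μ :=
  (memLp_comp_norm (hf.continuous_deriv le_rfl) hfc.deriv q).of_le
    (measurable_fderiv ℝ _).aestronglyMeasurable (ae_of_all _ fun x => by
      rw [norm_fderiv_comp_norm (hf.differentiable one_ne_zero) hf0, Real.norm_eq_abs])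

end Radial

theorem integral_fun_norm_fin_two (g : ℝ → ℝ) :
    ∫ x : EuclideanSpace ℝ (Fin 2), g ‖x‖ = 2 * π * ∫ r in Ioi 0, r * g r := by
  rw [integral_fun_norm_addHaar, finrank_euclideanSpace_fin, Measure.real,
    EuclideanSpace.volume_ball_fin_two]
  simp [ENNReal.toReal_ofReal pi_pos.le, mul_assoc]

theorem pi_mul_sq_sub_sq_le_integral_mul_sq {p : ℝ → ℝ} (hp0 : ∀ r > (0:ℝ), 0 ≤ p r)
    (hpmono : AntitoneOn p (Ioi 0)) {u a : ℝ} (hu : 0 < u) (hua : u ≤ a)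
    {w : EuclideanSpace ℝ (Fin 2) → ℝ} (hw : ∀ x, ‖x‖ ∈ Icc u a → w x = 1) (hw0 : w 0 = 0)
    (hint : Integrable (fun x => p ‖x‖ * w x ^ 2)) :
    π * p a * (a ^ 2 - u ^ 2) ≤ ∫ x, p ‖x‖ * w x ^ 2 := by
  have hIcc : Icc u a ⊆ Ioi 0 := fun r hr => hu.trans_le hr.1
  calc π * p a * (a ^ 2 - u ^ 2)
      = ∫ x : EuclideanSpace ℝ (Fin 2), (Icc u a).indicator (fun _ => p a) ‖x‖ := by
        rw [integral_fun_norm_fin_two, show (fun r => r * (Icc u a).indicator (fun _ => p a) r) =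
            (Icc u a).indicator (fun r => r * p a) from
          funext fun r => (indicator_mul_right _ (fun r => r) _).symm,
          setIntegral_indicator measurableSet_Icc, inter_eq_right.2 hIcc,
          integral_Icc_eq_integral_Ioc, ← intervalIntegral.integral_of_le hua,
          intervalIntegral.integral_mul_const, integral_id]
        ring
    _ ≤ ∫ x, p ‖x‖ * w x ^ 2 := by
        refine integral_mono_of_nonneg (ae_of_all _ fun x => ?_) hint
          (ae_of_all _ fun x => ?_) <;> dsimp only
        · exact indicator_nonneg (fun r hr => hp0 a (hu.trans_le (hr.1.trans hr.2))) _
        · by_cases hx : ‖x‖ ∈ Icc u a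
          · rw [indicator_of_mem hx, hw x hx, one_pow, mul_one]
            exact hpmono (hIcc hx) (hIcc ⟨hua, le_rfl⟩) hx.2
          · rw [indicator_of_notMem hx]
            rcases eq_or_ne x 0 with rfl | hx0
            · simp [hw0]
            · exact mul_nonneg (hp0 _ (norm_pos_iff.2 hx0)) (sq_nonneg _)

noncomputable def smoothPlateau (t : ℝ) : ℝ := smoothTransition t * smoothTransition (3 - t)

theorem smoothPlateau_of_nonpos {t : ℝ} (ht : t ≤ 0) : smoothPlateau t = 0 := by
  simp [smoothPlateau, smoothTransition.zero_of_nonpos ht]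

theorem smoothPlateau_of_three_le {t : ℝ} (ht : 3 ≤ t) : smoothPlateau t = 0 := by
  simp [smoothPlateau, smoothTransition.zero_of_nonpos (sub_nonpos.2 ht)]

theorem smoothPlateau_of_mem_Icc {t : ℝ} (ht : t ∈ Icc 1 2) : smoothPlateau t = 1 := by
  simp [smoothPlateau, smoothTransition.one_of_one_le ht.1,
    smoothTransition.one_of_one_le (by linarith [ht.2] : (1 : ℝ) ≤ 3 - t)]

theorem contDiff_smoothPlateau {n : ℕ∞} : ContDiff ℝ n smoothPlateau :=
  smoothTransition.contDiff.mul (smoothTransition.contDiff.comp (contDiff_const.sub contDiff_id))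

/-- Since `Real.log` is even with `log 0 = 0`, this is even in `r` and vanishes on `[-ε, ε]`,
including at `r = 0`. -/
noncomputable def logCutoff (ε L r : ℝ) : ℝ := smoothPlateau (log (r / ε) / L)

section LogCutoff

variable {ε L r : ℝ}

theorem logCutoff_eq_smoothPlateau_abs (hε : 0 < ε) :
    logCutoff ε L r = smoothPlateau (log (|r| / ε) / L) := by
  rw [logCutoff, ← log_abs, abs_div, abs_of_pos hε]

theorem logCutoff_of_abs_le (hε : 0 < ε) (hL : 0 < L) (hr : |r| ≤ ε) : logCutoff ε L r = 0 := by
  rw [logCutoff_eq_smoothPlateau_abs hε]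
  exact smoothPlateau_of_nonpos (div_nonpos_of_nonpos_of_nonneg
    (log_nonpos (by positivity) ((div_le_one hε).2 hr)) hL.le)

theorem logCutoff_of_le_abs (hε : 0 < ε) (hL : 0 < L) (hr : ε * exp (3 * L) ≤ |r|) :
    logCutoff ε L r = 0 := by
  rw [logCutoff_eq_smoothPlateau_abs hε]
  refine smoothPlateau_of_three_le ((le_div_iff₀ hL).2 ?_)
  rw [le_log_iff_exp_le (div_pos ((by positivity : 0 < ε * exp (3 * L)).trans_le hr) hε),
    le_div_iff₀ hε, mul_comm]
  exact hr

theorem logCutoff_of_mem_Icc (hε : 0 < ε) (hL : 0 < L)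
    (hr : r ∈ Icc (ε * exp L) (ε * exp (2 * L))) : logCutoff ε L r = 1 := by
  have hr0 : 0 < r / ε := div_pos ((by positivity : 0 < ε * exp L).trans_le hr.1) hε
  refine smoothPlateau_of_mem_Icc ⟨(le_div_iff₀ hL).2 ?_, (div_le_iff₀ hL).2 ?_⟩
  · rw [one_mul, le_log_iff_exp_le hr0, le_div_iff₀ hε, mul_comm]
    exact hr.1
  · rw [log_le_iff_le_exp hr0, div_le_iff₀ hε, mul_comm]
    exact hr.2

theorem logCutoff_of_mem_Icc_half {a : ℝ} (ha : 0 < a) (hL : 1 ≤ L) (hr : r ∈ Icc (a / 2) a) :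
    logCutoff (a * exp (-(2 * L))) L r = 1 := by
  refine logCutoff_of_mem_Icc (by positivity) (by linarith) ⟨?_, ?_⟩
  · have h2 : 2 ≤ exp L := by linarith [add_one_le_exp L]
    calc a * exp (-(2 * L)) * exp L = a / exp L := by
          rw [mul_assoc, ← exp_add, div_eq_mul_inv, ← exp_neg]; ring_nf
      _ ≤ a / 2 := by gcongr
      _ ≤ r := hr.1
  · calc r ≤ a := hr.2
      _ = a * exp (-(2 * L)) * exp (2 * L) := by rw [mul_assoc, ← exp_add]; simp

theorem logCutoff_eventuallyEq_zero (hε : 0 < ε) (hL : 0 < L)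
    (hr : |r| < ε ∨ ε * exp (3 * L) < |r|) : logCutoff ε L =ᶠ[𝓝 r] 0 := by
  rcases hr with hr | hr
  · filter_upwards [(isOpen_lt continuous_abs continuous_const).mem_nhds hr] with s hs
    exact logCutoff_of_abs_le hε hL (le_of_lt hs)
  · filter_upwards [(isOpen_lt continuous_const continuous_abs).mem_nhds hr] with s hs
    exact logCutoff_of_le_abs hε hL (le_of_lt hs)

theorem deriv_logCutoff_zero (hε : 0 < ε) (hL : 0 < L) : deriv (logCutoff ε L) 0 = 0 := by
  rw [(logCutoff_eventuallyEq_zero hε hL (by simpa using Or.inl hε)).deriv_eq]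
  exact deriv_const 0 0

theorem hasDerivAt_log_div_div (hε : ε ≠ 0) (hr : r ≠ 0) :
    HasDerivAt (fun s => log (s / ε) / L) (r⁻¹ / L) r := by
  have h := (((hasDerivAt_id' r).div_const ε).log (div_ne_zero hr hε)).div_const L
  rwa [show 1 / ε / (r / ε) = r⁻¹ by field_simp] at h

theorem hasDerivAt_logCutoff (hε : ε ≠ 0) (hr : r ≠ 0) :
    HasDerivAt (logCutoff ε L) (deriv smoothPlateau (log (r / ε) / L) * (r⁻¹ / L)) r :=
  (contDiff_smoothPlateau.differentiable (n := 1) one_ne_zero _).hasDerivAt.comp r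
    (hasDerivAt_log_div_div hε hr)

theorem contDiff_logCutoff (hε : 0 < ε) (hL : 0 < L) {n : ℕ∞} :
    ContDiff ℝ n (logCutoff ε L) := by
  refine contDiff_iff_contDiffAt.2 fun r => ?_
  rcases eq_or_ne r 0 with rfl | hr
  · exact contDiffAt_const.congr_of_eventuallyEq
      (logCutoff_eventuallyEq_zero hε hL (by simpa using Or.inl hε))
  · exact contDiff_smoothPlateau.contDiffAt.comp r
      (((contDiffAt_log.2 (div_ne_zero hr hε.ne')).comp r
        (contDiffAt_id.div_const ε)).div_const L)

theorem hasCompactSupport_logCutoff (hε : 0 < ε) (hL : 0 < L) :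
    HasCompactSupport (logCutoff ε L) :=
  HasCompactSupport.intro (isCompact_closedBall 0 (ε * exp (3 * L))) fun r hr =>
    logCutoff_of_le_abs hε hL (by simpa using (not_le.1 (by simpa using hr)).le)

theorem integral_mul_deriv_logCutoff_sq (hε : 0 < ε) (hL : 0 < L) :
    ∫ r in Ioi 0, r * deriv (logCutoff ε L) r ^ 2 =
      (∫ t in 0..3, deriv smoothPlateau t ^ 2) / L := by
  set R := ε * exp (3 * L)
  have hεR : ε ≤ R := le_mul_of_one_le_right hε.le (one_le_exp (by positivity))
  rw [setIntegral_eq_of_subset_of_forall_sdiff_eq_zero measurableSet_Ioi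
      (fun r hr => hε.trans_le hr.1 : Icc ε R ⊆ Ioi 0), integral_Icc_eq_integral_Ioc,
    ← intervalIntegral.integral_of_le hεR]
  · have hpos : ∀ r ∈ uIcc ε R, 0 < r := fun r hr => hε.trans_le (uIcc_of_le hεR ▸ hr).1
    -- with `t = log (r / ε) / L`, the weight `r` cancels one factor `dt/dr = 1 / (L r)` of
    -- `(dw/dr)² = b'(t)² (dt/dr)²`: the scale invariance of the planar Dirichlet integral.
    calc ∫ r in ε..R, r * deriv (logCutoff ε L) r ^ 2
        = ∫ r in ε..R, L⁻¹ * (((fun t => deriv smoothPlateau t ^ 2) ∘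
            fun s => log (s / ε) / L) r * (r⁻¹ / L)) := by
          refine intervalIntegral.integral_congr fun r hr => ?_
          rw [(hasDerivAt_logCutoff hε.ne' (hpos r hr).ne').deriv]
          field_simp [(hpos r hr).ne']
          rfl
      _ = L⁻¹ * ∫ t in log (ε / ε) / L..log (R / ε) / L, deriv smoothPlateau t ^ 2 := by
          rw [intervalIntegral.integral_const_mul, intervalIntegral.integral_comp_mul_deriv
            (g := fun t => deriv smoothPlateau t ^ 2)
            (fun r hr => hasDerivAt_log_div_div hε.ne' (hpos r hr).ne')
            ((continuousOn_inv₀.mono fun r hr => (hpos r hr).ne').div_const L)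
            ((contDiff_smoothPlateau.continuous_deriv (n := 1) le_rfl).pow 2)]
      _ = _ := by
          rw [div_self hε.ne', log_one, zero_div, mul_div_cancel_left₀ _ hε.ne', log_exp,
            mul_div_cancel_right₀ _ hL.ne', inv_mul_eq_div]
  · rintro r ⟨hr0, hr⟩
    have hr' : |r| < ε ∨ R < |r| := by
      rw [abs_of_pos hr0]
      by_contra! h
      exact hr ⟨h.1, h.2⟩
    simp [(logCutoff_eventuallyEq_zero hε hL hr').deriv_eq]

theorem integral_norm_fderiv_logCutoff_sq (hε : 0 < ε) (hL : 0 < L) :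
    ∫ x : EuclideanSpace ℝ (Fin 2), ‖fderiv ℝ (fun x => logCutoff ε L ‖x‖) x‖ ^ 2 =
      2 * π * ((∫ t in 0..3, deriv smoothPlateau t ^ 2) / L) := by
  simp_rw [norm_fderiv_comp_norm ((contDiff_logCutoff hε hL).differentiable one_ne_zero)
    (deriv_logCutoff_zero hε hL), sq_abs]
  rw [integral_fun_norm_fin_two (fun r => deriv (logCutoff ε L) r ^ 2),
    integral_mul_deriv_logCutoff_sq hε hL]

end LogCutoff

/-- for `N = 2` and `p` nonnegative, non-increasing with `p(a) > 0` for some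
`a ∈ (0,1]`, there is `w ∈ H¹(ℝ²)` with `(1/2)∫|∇w|² − (1/2)∫ p(|x|)w² < 0`. -/
theorem stmt10 (p : ℝ → ℝ) (hp0 : ∀ r > (0:ℝ), 0 ≤ p r)
    (hpmono : AntitoneOn p (Set.Ioi (0:ℝ)))
    (a : ℝ) (ha : a ∈ Set.Ioc (0:ℝ) 1) (hpa : 0 < p a) :
    ∃ w : EuclideanSpace ℝ (Fin 2) → ℝ, MemLp w 2 volume ∧ Differentiable ℝ w ∧
      MemLp (fun x => fderiv ℝ w x) 2 volume ∧
      Integrable (fun x => p ‖x‖ * (w x) ^ 2) volume ∧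
      (1 / 2) * (∫ x, ‖fderiv ℝ w x‖ ^ 2) - (1 / 2) * (∫ x, p ‖x‖ * (w x) ^ 2) < 0 := by
  have ha0 : 0 < a := ha.1
  set K := ∫ t in (0:ℝ)..3, deriv smoothPlateau t ^ 2 with hK
  obtain ⟨L, hL1, hLK⟩ : ∃ L : ℝ, 1 ≤ L ∧ 3 * K < L * (p a * a ^ 2) := by
    obtain ⟨L, hL⟩ := exists_gt (max 1 (3 * K / (p a * a ^ 2)))
    exact ⟨L, (le_max_left _ _).trans hL.le,
      (div_lt_iff₀ (by positivity)).1 ((le_max_right _ _).trans_lt hL)⟩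
  have hL : 0 < L := by linarith
  set ε := a * exp (-(2 * L))
  have hε : 0 < ε := by positivity
  have hf : ContDiff ℝ 1 (logCutoff ε L) := contDiff_logCutoff hε hL
  have hf0 := deriv_logCutoff_zero hε hL
  have hw : MemLp (fun x : EuclideanSpace ℝ (Fin 2) => logCutoff ε L ‖x‖) 2 volume :=
    memLp_comp_norm hf.continuous (hasCompactSupport_logCutoff hε hL) 2
  have hint := integrable_comp_norm_mul_sq hp0 hpmono hε hw fun x hx =>
    logCutoff_of_abs_le hε hL (by simpa using hx.le)
  have hpot : π * p a * (a ^ 2 - (a / 2) ^ 2) ≤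
      ∫ x : EuclideanSpace ℝ (Fin 2), p ‖x‖ * logCutoff ε L ‖x‖ ^ 2 := by
    exact pi_mul_sq_sub_sq_le_integral_mul_sq hp0 hpmono (by positivity) (by linarith)
      (fun x hx => logCutoff_of_mem_Icc_half ha0 hL1 hx)
      (logCutoff_of_abs_le hε hL (by simpa using hε.le)) hint
  refine ⟨_, hw, differentiable_comp_norm (hf.differentiable one_ne_zero) hf0,
    memLp_fderiv_comp_norm hf hf0 (hasCompactSupport_logCutoff hε hL) 2, hint, ?_⟩
  have hKL : π * (K / L) < π * (p a * a ^ 2 / 3) :=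
    mul_lt_mul_of_pos_left ((div_lt_iff₀ hL).2 (by linarith)) pi_pos
  rw [integral_norm_fderiv_logCutoff_sq hε hL, ← hK]
  nlinarith [show 0 < π * p a * a ^ 2 by positivity]
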